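/- arXiv:1704.02563 — 6 statements merged into one kernel-verified Lean document; each statement's English description precedes it below -/
import Mathlib

section
/- Let a, b ∈ ℝ with a < b, and define x₁(t) = a·cosh t − b·sinh t and x₂(t) = b·cosh t − a·sinh t. Then the Hausdorff distance between the interval [x₁(t), x₂(t)] and the singleton {0} tends to +∞ as t → +∞. -/
open Filter

/-- For `a < b`, with `x₁(t) = a·cosh t − b·sinh t` and
`x₂(t) = b·cosh t − a·sinh t`, the Hausdorff distance between the interval
`[x₁(t), x₂(t)]` and the singleton `{0}` tends to `+∞` as `t → +∞`. -/
theorem stmt2 (a b : ℝ) (hab : a < b) (x₁ x₂ : ℝ → ℝ)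
    (hx₁ : ∀ t, x₁ t = a * Real.cosh t - b * Real.sinh t)
    (hx₂ : ∀ t, x₂ t = b * Real.cosh t - a * Real.sinh t) :
    Tendsto (fun t : ℝ => Metric.hausdorffDist (Set.Icc (x₁ t) (x₂ t)) ({0} : Set ℝ))
      atTop atTop := by
  -- x₁ t ≤ x₂ t for all t
  have hle : ∀ t, x₁ t ≤ x₂ t := by
    intro t
    have h : x₂ t - x₁ t = (b - a) * Real.exp t := by
      rw [hx₁ t, hx₂ t, Real.cosh_eq, Real.sinh_eq]; ring
    nlinarith [Real.exp_pos t, sub_pos.mpr hab]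
  -- x₂ tends to +∞
  have hx2top : Tendsto x₂ atTop atTop := by
    have h1 : Tendsto (fun t : ℝ => (b - a) / 2 * Real.exp t) atTop atTop :=
      Tendsto.const_mul_atTop (by linarith) Real.tendsto_exp_atTop
    have h2 : Tendsto (fun t : ℝ => (b + a) / 2 * Real.exp (-t)) atTop (nhds 0) := by
      have := (Real.tendsto_exp_neg_atTop_nhds_zero).const_mul ((b + a) / 2)
      simpa using this
    have := h2.add_atTop h1
    refine this.congr fun t => ?_
    rw [hx₂ t, Real.cosh_eq, Real.sinh_eq]; ring
  -- Hausdorff distance bound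
  refine tendsto_atTop_mono (fun t => ?_) hx2top
  have hne : EMetric.hausdorffEdist (Set.Icc (x₁ t) (x₂ t)) ({0} : Set ℝ) ≠ ⊤ := by
    apply Metric.hausdorffEdist_ne_top_of_nonempty_of_bounded
    · exact Set.nonempty_Icc.mpr (hle t)
    · exact Set.singleton_nonempty 0
    · exact Metric.isBounded_Icc _ _
    · exact Bornology.isBounded_singleton
  have hmem : x₂ t ∈ Set.Icc (x₁ t) (x₂ t) := Set.right_mem_Icc.mpr (hle t)
  have := Metric.infDist_le_hausdorffDist_of_mem hmem hne
  rw [Metric.infDist_singleton, Real.dist_eq, sub_zero] at this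
  exact le_trans (le_abs_self _) this
end

section
/- For an integer m ≥ 3, let Ω denote the m × m real matrix with rows and columns indexed by 0, 1, …, m−1, whose entries are: Ω(0,1) = 2; Ω(i,j) = 1 whenever |i − j| = 1 and (i,j) ≠ (0,1); Ω(m−1,0) = 1; and all other entries equal 0. Then the set of complex eigenvalues of Ω (the roots of its characteristic polynomial over ℂ) equals { 2·cos(2πq/m) : q ∈ ℤ, 0 ≤ q ≤ ⌊m/2⌋ }. -/
/-- The `m × m` comparison matrix `Ω`: `Ω 0 1 = 2`, `Ω i j = 1` when `|i − j| = 1`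
and `(i,j) ≠ (0,1)`, `Ω (m−1) 0 = 1`, all other entries `0`. -/
def OmegaMat (m : ℕ) : Matrix (Fin m) (Fin m) ℝ := fun i j =>
  if i.val = 0 ∧ j.val = 1 then 2
  else if i.val + 1 = j.val ∨ j.val + 1 = i.val then 1
  else if i.val = m - 1 ∧ j.val = 0 then 1
  else 0

open Polynomial Matrix Real

/-!
Write `c = e₁ + e₋₁` (`cycleVec`) on `ℤ/m`. The matrix `Ω` is the symmetric circulant
matrix `circulant c` whose zeroth row `e₁ + e₋₁` has been replaced by
`2e₁ = c + (e₁ - e₋₁)`. Expanding `det (X - Ω)` along that row, the perturbation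
contributes the difference of two determinants that are exchanged by the symmetry `i ↦ -i` of
`circulant c`, so `Ω` and `circulant c` have the same characteristic polynomial. The additive
characters `j ↦ ζ ^ (q j)`, `ζ = exp (2πi/m)`, diagonalise every circulant matrix (their
matrix is a Vandermonde matrix), which gives the eigenvalues `ζ ^ q + ζ ^ (-q) = 2 cos (2πq/m)`,
`0 ≤ q < m`; finally `q` and `m - q` give the same value.
-/

namespace Matrix

theorem circulant_submatrix_neg {n α : Type*} [AddCommGroup n] {v : n → α}
    (hv : ∀ k, v (-k) = v k) :
    (circulant v).submatrix (Equiv.neg n) (Equiv.neg n) = circulant v := by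
  ext i j
  simp only [submatrix_apply, Equiv.neg_apply, circulant_apply, neg_sub_neg, ← hv (i - j),
    neg_sub]

variable {n R : Type*} [Fintype n] [CommRing R]

theorem circulant_mulVec_addChar [AddCommGroup n] (v : n → R) (ψ : AddChar n R) :
    circulant v *ᵥ ⇑ψ = (∑ k, v k * ψ (-k)) • ⇑ψ := by
  ext i
  simp only [mulVec, dotProduct, circulant_apply, Pi.smul_apply, smul_eq_mul, Finset.sum_mul]
  refine Fintype.sum_equiv (Equiv.subLeft i) _ _ fun j => ?_
  simp only [Equiv.subLeft_apply, mul_assoc, ← AddChar.map_add_eq_mul]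
  congr 2
  abel

theorem circulant_mul_of_addChar [AddCommGroup n] {ι : Type*} [Fintype ι] [DecidableEq ι]
    (v : n → R) (ψ : ι → AddChar n R) :
    circulant v * of (fun i q => ψ q i) =
      of (fun i q => ψ q i) * diagonal (fun q => ∑ k, v k * ψ q (-k)) := by
  ext i q
  rw [mul_diagonal]
  simpa [mul_apply, mulVec, dotProduct, mul_comm] using
    congrFun (circulant_mulVec_addChar v (ψ q)) i

variable [DecidableEq n]

theorem charpoly_eq_of_mul_eq_mul {A B P : Matrix n n R} (hP : IsUnit P.det)
    (h : A * P = P * B) : A.charpoly = B.charpoly := by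
  obtain ⟨U, rfl⟩ := (isUnit_iff_isUnit_det P).mpr hP
  have hA : A = U.val * B * U.val⁻¹ := by
    rw [← h, Matrix.mul_assoc, mul_nonsing_inv _ hP, Matrix.mul_one]
  rw [hA, charpoly_units_conj]

theorem charpoly_circulant_of_addChar [AddCommGroup n] (v : n → R) (ψ : n → AddChar n R)
    (hψ : IsUnit (of fun i q => ψ q i).det) :
    (circulant v).charpoly = ∏ q, (X - C (∑ k, v k * ψ q (-k))) := by
  rw [charpoly_eq_of_mul_eq_mul hψ (circulant_mul_of_addChar v ψ), charpoly_diagonal]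

theorem det_updateRow_comp_equiv {M : Matrix n n R} (σ : n ≃ n) (hM : M.submatrix σ σ = M)
    {i : n} (hi : σ i = i) (r : n → R) :
    (M.updateRow i (r ∘ σ)).det = (M.updateRow i r).det := by
  rw [← det_submatrix_equiv_self σ (M.updateRow i r), submatrix_updateRow_equiv, hM]
  congr 2
  rw [eq_comm, Equiv.symm_apply_eq, hi]

theorem charmatrix_updateRow (M : Matrix n n R) (i : n) (r : n → R) :
    charmatrix (M.updateRow i r) =
      (charmatrix M).updateRow i (charmatrix M i + fun j => C (M i j - r j)) := by
  ext k j : 1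
  rcases eq_or_ne k i with rfl | hk
  · by_cases hkj : k = j
    · subst hkj
      simp [charmatrix_apply_eq]
    · simp only [charmatrix_apply_ne _ _ _ hkj, updateRow_self, map_sub, Pi.add_apply]
      ring
  · rw [updateRow_ne hk, charmatrix_apply, charmatrix_apply, updateRow_ne hk]

theorem charmatrix_submatrix_equiv {m : Type*} [Fintype m] [DecidableEq m] (M : Matrix n n R)
    (e : m ≃ n) :
    charmatrix (M.submatrix e e) = (charmatrix M).submatrix e e := by
  simpa using charmatrix_reindex (M := M) e.symm

theorem charpoly_updateRow_zero_circulant [AddCommGroup n] {v : n → R} (hv : ∀ k, v (-k) = v k)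
    (r : n → R) :
    ((circulant v).updateRow 0 (fun j => v j + r j - r (-j))).charpoly =
      (circulant v).charpoly := by
  set M := charmatrix (circulant v)
  have hM : M.submatrix (Equiv.neg n) (Equiv.neg n) = M := by
    rw [← charmatrix_submatrix_equiv, circulant_submatrix_neg hv]
  have hrow : (fun j => C (circulant v 0 j - (v j + r j - r (-j)))) =
      (fun j => C (r j)) ∘ Equiv.neg n + (-1 : R[X]) • fun j => C (r j) := by
    ext1 j
    simp only [circulant_apply, zero_sub, hv, map_sub, map_add, Equiv.neg_apply, neg_smul,
      one_smul, Pi.add_apply, Function.comp_apply, Pi.neg_apply]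
    ring
  rw [charpoly, charmatrix_updateRow, hrow, det_updateRow_add, updateRow_eq_self,
    det_updateRow_add, det_updateRow_smul, det_updateRow_comp_equiv _ hM (neg_zero (G := n)),
    charpoly]
  ring

end Matrix

section FinCharacters

variable {m : ℕ} [NeZero m]

def Fin.powAddChar {M : Type*} [CommMonoid M] {ω : M} (hω : ω ^ m = 1) : AddChar (Fin m) M where
  toFun j := ω ^ (j : ℕ)
  map_zero_eq_one' := by simp
  map_add_eq_mul' a b := by rw [Fin.val_add, ← pow_eq_pow_mod _ hω, pow_add]

theorem Fin.powAddChar_apply {M : Type*} [CommMonoid M] {ω : M} (hω : ω ^ m = 1) (j : Fin m) :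
    Fin.powAddChar hω j = ω ^ (j : ℕ) :=
  rfl

theorem Fin.powAddChar_mul {M : Type*} [CommMonoid M] {ω : M} (hω : ω ^ m = 1) (i j : Fin m) :
    Fin.powAddChar hω (i * j) = (ω ^ (i : ℕ)) ^ (j : ℕ) := by
  rw [Fin.powAddChar_apply, Fin.val_mul, ← pow_eq_pow_mod _ hω, pow_mul]

variable {K : Type*} [Field K] {ζ : K}

theorem isUnit_det_powAddChar_mulLeft (hζ : IsPrimitiveRoot ζ m) :
    IsUnit (of fun i q : Fin m =>
      (Fin.powAddChar hζ.pow_eq_one).compAddMonoidHom (AddMonoidHom.mulLeft q) i).det := by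
  have hF : (of fun i q : Fin m =>
      (Fin.powAddChar hζ.pow_eq_one).compAddMonoidHom (AddMonoidHom.mulLeft q) i) =
        vandermonde fun i : Fin m => ζ ^ (i : ℕ) := by
    ext i q
    rw [of_apply, AddChar.compAddMonoidHom_apply, AddMonoidHom.coe_mulLeft, mul_comm,
      Fin.powAddChar_mul, vandermonde_apply]
  rw [hF, isUnit_iff_ne_zero, det_vandermonde_ne_zero_iff]
  intro i j h
  exact Fin.ext (hζ.pow_inj i.isLt j.isLt h)

theorem charpoly_circulant_fin (hζ : IsPrimitiveRoot ζ m) (v : Fin m → K) :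
    (circulant v).charpoly =
      ∏ q : Fin m, (X - C (∑ k, v k * Fin.powAddChar hζ.pow_eq_one (q * -k))) := by
  rw [charpoly_circulant_of_addChar v _ (isUnit_det_powAddChar_mulLeft hζ)]
  simp only [AddChar.compAddMonoidHom_apply, AddMonoidHom.coe_mulLeft]

end FinCharacters

def cycleVec (R : Type*) [AddMonoidWithOne R] (m : ℕ) [NeZero m] : Fin m → R :=
  Pi.single 1 1 + Pi.single (-1) 1

section CycleVec

variable {R : Type*} [CommRing R] {m : ℕ} [NeZero m]

theorem cycleVec_neg (k : Fin m) : cycleVec R m (-k) = cycleVec R m k := by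
  simp only [cycleVec, Pi.add_apply, Pi.single_apply, neg_eq_iff_eq_neg, neg_neg]
  exact add_comm _ _

theorem sum_cycleVec_mul (f : Fin m → R) : ∑ k, cycleVec R m k * f k = f 1 + f (-1) := by
  simp [cycleVec, add_mul, Finset.sum_add_distrib, Pi.single_apply]

theorem omegaMat_map_eq (f : ℝ →+* R) (hm : 3 ≤ m) :
    (OmegaMat m).map f = (circulant (cycleVec R m)).updateRow 0 (Pi.single 1 2) := by
  obtain ⟨n, rfl⟩ : ∃ n, m = n + 3 := ⟨m - 3, by omega⟩
  ext i j
  simp only [map_apply, OmegaMat, updateRow_apply, circulant_apply, cycleVec, Pi.add_apply,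
    Pi.single_apply]
  have hi := i.isLt
  have hj := j.isLt
  rcases le_or_gt j i with h | h
  · have h' := Fin.le_def.mp h
    simp only [Fin.ext_iff, Fin.coe_sub_iff_le.mpr h, Fin.val_zero, Fin.val_one, Fin.coe_neg_one]
    split_ifs <;> first | omega | norm_num [map_ofNat]
  · have h' := Fin.lt_def.mp h
    simp only [Fin.ext_iff, Fin.coe_sub_iff_lt.mpr h, Fin.val_zero, Fin.val_one, Fin.coe_neg_one]
    split_ifs <;> first | omega | norm_num [map_ofNat]

theorem charpoly_omegaMat_map (f : ℝ →+* R) (hm : 3 ≤ m) :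
    ((OmegaMat m).map f).charpoly = (circulant (cycleVec R m)).charpoly := by
  have hrow : (Pi.single 1 2 : Fin m → R) =
      fun j => cycleVec R m j + (Pi.single 1 1 : Fin m → R) j -
        (Pi.single 1 1 : Fin m → R) (-j) := by
    ext j
    simp only [cycleVec, Pi.add_apply, Pi.single_apply, neg_eq_iff_eq_neg]
    split_ifs <;> norm_num
  rw [omegaMat_map_eq f hm, hrow, charpoly_updateRow_zero_circulant cycleVec_neg]

end CycleVec

theorem sum_cycleVec_mul_powAddChar_exp {m : ℕ} [NeZero m] (q : Fin m) :
    ∑ k, cycleVec ℂ m k *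
        Fin.powAddChar (Complex.isPrimitiveRoot_exp m (NeZero.ne m)).pow_eq_one (q * -k) =
      ((2 * cos (2 * π * q / m) : ℝ) : ℂ) := by
  set ψ := Fin.powAddChar (Complex.isPrimitiveRoot_exp m (NeZero.ne m)).pow_eq_one
  have hψ : ψ q = Complex.exp (↑(2 * π * q / m) * Complex.I) := by
    rw [Fin.powAddChar_apply, ← Complex.exp_nat_mul]
    congr 1
    push_cast
    ring
  simp only [sum_cycleVec_mul, mul_neg, mul_one, AddChar.map_neg_eq_inv, hψ, ← Complex.exp_neg]
  push_cast
  rw [Complex.two_cos, neg_mul, neg_neg, add_comm]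

theorem Real.exists_cos_two_pi_mul_div_eq {m q : ℕ} (hq : q ≤ m) :
    ∃ q' : ℕ, q' ≤ m / 2 ∧ cos (2 * π * q / m) = cos (2 * π * q' / m) := by
  by_cases hle : q ≤ m / 2
  · exact ⟨q, hle, rfl⟩
  · refine ⟨m - q, by omega, ?_⟩
    have hm : (m : ℝ) ≠ 0 := by norm_cast; omega
    have harg : 2 * π * ((m : ℝ) - q) / m = 2 * π - 2 * π * q / m := by field_simp
    rw [Nat.cast_sub hq, harg, cos_two_pi_sub]

/-- For `m ≥ 3`, the set of complex eigenvalues of `Ω` (roots of its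
characteristic polynomial over `ℂ`) is `{ 2·cos(2πq/m) : 0 ≤ q ≤ ⌊m/2⌋ }`. -/
theorem stmt3 (m : ℕ) (hm : 3 ≤ m) :
    {z : ℂ | ((OmegaMat m).map (fun r : ℝ => (r : ℂ))).charpoly.IsRoot z} =
      {z : ℂ | ∃ q : ℤ, 0 ≤ q ∧ q ≤ (m : ℤ) / 2 ∧
        z = ((2 * Real.cos (2 * Real.pi * q / m) : ℝ) : ℂ)} := by
  have : NeZero m := ⟨by omega⟩
  have hchar : ((OmegaMat m).map (fun r : ℝ => (r : ℂ))).charpoly =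
      ∏ q : Fin m, (X - C ((2 * cos (2 * π * q / m) : ℝ) : ℂ)) := by
    refine (charpoly_omegaMat_map Complex.ofRealHom hm).trans ?_
    rw [charpoly_circulant_fin (Complex.isPrimitiveRoot_exp m (NeZero.ne m))]
    simp only [sum_cycleVec_mul_powAddChar_exp]
  ext z
  simp only [hchar, isRoot_prod, Finset.mem_univ, true_and, root_X_sub_C]
  constructor
  · rintro ⟨q, rfl⟩
    obtain ⟨q', hq', hcos⟩ := Real.exists_cos_two_pi_mul_div_eq q.isLt.le
    exact ⟨q', by positivity, by omega, by rw [hcos]; norm_cast⟩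
  · rintro ⟨q, hq0, hq, rfl⟩
    lift q to ℕ using hq0
    exact ⟨⟨q, by omega⟩, by simp⟩
end

section
/- For an integer m ≥ 3, let Ω denote the m × m real matrix with rows and columns indexed by 0, 1, …, m−1, whose entries are: Ω(0,1) = 2; Ω(i,j) = 1 whenever |i − j| = 1 and (i,j) ≠ (0,1); Ω(m−1,0) = 1; and all other entries equal 0. Let λ, q₁, q₂ ∈ ℂ satisfy q₁ + q₂ = λ, q₁·q₂ = 1, q₁ ≠ q₂, and q₁^m + q₂^m ≠ 2. Then for any vectors x, f ∈ ℂ^m with (Ω − λI)x = f, one has x₀ = [ (q₁^m − q₂^m)·f₀ + 2·Σ_{p=1}^{m−1} (q₁^{m−p} − q₂^{m−p})·f_p ] / ( (q₁ − q₂)(2 − q₁^m − q₂^m) ). -/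
/-!
Rows `1, …, m − 1` of `(Ω − λI)x = f` form the recurrence `x_{k−1} + x_{k+1} − λ x_k = f_k`
with `x_m = x_0`, and row `0` reads `2 x_1 − λ x_0 = f_0`. As `q₁, q₂` are the roots of
`q² − λq + 1`, `s_k = q₁^k − q₂^k` solves the homogeneous recurrence, so by the discrete Green
identity `∑_{k=1}^{m−1} s_{m−k} f_k` telescopes to Casoratian boundary terms in `x_0` and `x_1`.
In `s_m f_0 + 2 ∑ …` the `x_1` terms cancel, leaving `(q₁ − q₂)(2 − q₁^m − q₂^m) x_0`.
-/

open scoped BigOperators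

open Finset Matrix Fin.NatCast

section SecondOrderRecurrence

variable {R : Type*} [CommRing R]

def casoratian (u X : ℕ → R) (k : ℕ) : R := u k * X (k + 1) - u (k + 1) * X k

theorem sum_range_mul_eq_casoratian_sub_of_recurrence {lam : R} {u : ℕ → R} {n : ℕ}
    (hu : ∀ k < n, u k + u (k + 2) = lam * u (k + 1)) (X : ℕ → R) :
    ∑ k ∈ range n, u (k + 1) * (X k + X (k + 2) - lam * X (k + 1)) =
      casoratian u X n - casoratian u X 0 := by
  rw [← sum_range_sub (casoratian u X)]
  refine sum_congr rfl fun k hk => ?_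
  unfold casoratian
  linear_combination X (k + 1) * hu k (mem_range.1 hk)

theorem pow_sub_pow_add_pow_sub_pow {q₁ q₂ : R} (hprod : q₁ * q₂ = 1) (k : ℕ) :
    (q₁ ^ k - q₂ ^ k) + (q₁ ^ (k + 2) - q₂ ^ (k + 2)) =
      (q₁ + q₂) * (q₁ ^ (k + 1) - q₂ ^ (k + 1)) := by
  linear_combination (q₂ ^ k - q₁ ^ k) * hprod

theorem weighted_sum_eq_of_periodic_bvp {q₁ q₂ : R} (hprod : q₁ * q₂ = 1) {n : ℕ} {X f : ℕ → R}
    (hX : X (n + 1) = X 0) (hf₀ : f 0 = 2 * X 1 - (q₁ + q₂) * X 0)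
    (hf : ∀ k < n, f (k + 1) = X k + X (k + 2) - (q₁ + q₂) * X (k + 1)) :
    (q₁ ^ (n + 1) - q₂ ^ (n + 1)) * f 0 +
        2 * ∑ k ∈ range n, (q₁ ^ (n - k) - q₂ ^ (n - k)) * f (k + 1) =
      (q₁ - q₂) * (2 - q₁ ^ (n + 1) - q₂ ^ (n + 1)) * X 0 := by
  set u : ℕ → R := fun k => q₁ ^ (n + 1 - k) - q₂ ^ (n + 1 - k)
  have hu : ∀ k < n, u k + u (k + 2) = (q₁ + q₂) * u (k + 1) := by
    intro k hk
    obtain ⟨j, hj⟩ : ∃ j, n + 1 - k = j + 2 := ⟨n - 1 - k, by omega⟩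
    simp only [u, hj, show n + 1 - (k + 2) = j by omega, show n + 1 - (k + 1) = j + 1 by omega]
    linear_combination pow_sub_pow_add_pow_sub_pow hprod j
  have hsum : ∑ k ∈ range n, u (k + 1) * f (k + 1) = casoratian u X n - casoratian u X 0 := by
    rw [← sum_range_mul_eq_casoratian_sub_of_recurrence hu X]
    exact sum_congr rfl fun k hk => by rw [hf k (mem_range.1 hk)]
  simp only [casoratian, u, Nat.add_sub_add_right, Nat.sub_zero, Nat.sub_self,
    Nat.add_sub_cancel_left, Nat.add_sub_cancel, pow_zero, pow_one, sub_self, hX] at hsum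
  rw [hsum, hf₀]
  linear_combination 2 * X 0 * (q₂ ^ n - q₁ ^ n) * hprod

end SecondOrderRecurrence

section OmegaMat

variable {n : ℕ}

theorem omegaMat_zero_apply (hn : 2 ≤ n) (j : Fin (n + 1)) :
    OmegaMat (n + 1) 0 j = if j = 1 then 2 else 0 := by
  have h0 : (0 : Fin (n + 1)).val = 0 := rfl
  have h1 : (1 : Fin (n + 1)).val = 1 := by simp; omega
  simp only [OmegaMat, h0, Fin.ext_iff, h1, true_and, zero_add]
  split_ifs <;> simp_all

theorem omegaMat_apply_of_ne_zero (hn : 2 ≤ n) {i : Fin (n + 1)} (hi : i ≠ 0) (j : Fin (n + 1)) :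
    OmegaMat (n + 1) i j = if j = i - 1 ∨ j = i + 1 then 1 else 0 := by
  have hprev : (i - 1).val = i.val - 1 := Fin.val_sub_one_of_ne_zero hi
  have hnext : (i + 1).val = if i.val = n then 0 else i.val + 1 := by
    simp [Fin.val_add_one, Fin.ext_iff]
  have hi' : i.val ≠ 0 := fun h => hi (Fin.ext h)
  have := i.isLt
  simp only [OmegaMat, Fin.ext_iff, hprev, hnext]
  by_cases hlast : i.val = n
  all_goals simp only [hlast, if_true, if_false]
  all_goals split_ifs <;> first | rfl | (exfalso; omega)

theorem omegaMat_mulVec_zero (hn : 2 ≤ n) (x : Fin (n + 1) → ℂ) :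
    ((OmegaMat (n + 1)).map (fun r : ℝ => (r : ℂ)) *ᵥ x) 0 = 2 * x 1 := by
  simp [mulVec, dotProduct, omegaMat_zero_apply hn, apply_ite]

theorem omegaMat_mulVec_of_ne_zero (hn : 2 ≤ n) (x : Fin (n + 1) → ℂ) {i : Fin (n + 1)}
    (hi : i ≠ 0) :
    ((OmegaMat (n + 1)).map (fun r : ℝ => (r : ℂ)) *ᵥ x) i = x (i - 1) + x (i + 1) := by
  have hne : i - 1 ≠ i + 1 := by
    rw [Ne, sub_eq_iff_eq_add, add_assoc, left_eq_add, Fin.ext_iff]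
    intro h
    simp only [Fin.val_add, Fin.val_one', Fin.val_zero, Nat.add_mod_mod, Nat.mod_add_mod] at h
    rw [Nat.mod_eq_of_lt (by omega)] at h
    omega
  rw [mulVec, dotProduct, Fintype.sum_eq_add _ _ hne]
  · simp [omegaMat_apply_of_ne_zero hn hi, hne, hne.symm]
  · intro j hj
    simp [omegaMat_apply_of_ne_zero hn hi, hj.1, hj.2]

theorem omegaMat_mulVec_natCast_succ (hn : 2 ≤ n) (x : Fin (n + 1) → ℂ) {k : ℕ} (hk : k < n) :
    ((OmegaMat (n + 1)).map (fun r : ℝ => (r : ℂ)) *ᵥ x) (k + 1 : ℕ) = x k + x (k + 2 : ℕ) := by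
  have hk0 : ((k + 1 : ℕ) : Fin (n + 1)) ≠ 0 := by
    rw [Ne, Fin.ext_iff, Fin.val_natCast, Nat.mod_eq_of_lt (by omega)]
    simp
  rw [omegaMat_mulVec_of_ne_zero hn x hk0]
  push_cast
  rw [add_sub_cancel_right, add_assoc, one_add_one_eq_two]

end OmegaMat

theorem sum_univ_erase_zero_eq_sum_range {M : Type*} [AddCommMonoid M] (n : ℕ) (g : ℕ → M) :
    ∑ p ∈ univ.erase (0 : Fin (n + 1)), g p = ∑ k ∈ range n, g (k + 1) := by
  rw [Fin.univ_succ, erase_cons, sum_map]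
  exact Fin.sum_univ_eq_sum_range (fun k => g (k + 1)) n

/-- If `q₁ + q₂ = λ`, `q₁ q₂ = 1`, `q₁ ≠ q₂`, `q₁^m + q₂^m ≠ 2`, and
`(Ω − λI)x = f`, then `x₀` is given by the explicit resolvent formula. -/
theorem stmt4 (m : ℕ) (hm : 3 ≤ m) (lam q₁ q₂ : ℂ)
    (hsum : q₁ + q₂ = lam) (hprod : q₁ * q₂ = 1) (hne : q₁ ≠ q₂)
    (hm2 : q₁ ^ m + q₂ ^ m ≠ 2)
    (x f : Fin m → ℂ)
    (hxf : (((OmegaMat m).map (fun r : ℝ => (r : ℂ))) - lam • 1).mulVec x = f) :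
    x ⟨0, by omega⟩ =
      ((q₁ ^ m - q₂ ^ m) * f ⟨0, by omega⟩ +
        2 * ∑ p ∈ Finset.univ.erase (⟨0, by omega⟩ : Fin m),
          (q₁ ^ (m - p.val) - q₂ ^ (m - p.val)) * f p) /
      ((q₁ - q₂) * (2 - q₁ ^ m - q₂ ^ m)) := by
  subst hsum
  obtain ⟨n, rfl⟩ : ∃ n, m = n + 1 := ⟨m - 1, by omega⟩
  have hn : 2 ≤ n := by omega
  have hrow : ∀ i, f i =
      ((OmegaMat (n + 1)).map (fun r : ℝ => (r : ℂ)) *ᵥ x) i - (q₁ + q₂) * x i := by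
    intro i
    rw [← hxf, sub_mulVec, smul_mulVec, one_mulVec]
    rfl
  have hD : (q₁ - q₂) * (2 - q₁ ^ (n + 1) - q₂ ^ (n + 1)) ≠ 0 :=
    mul_ne_zero (sub_ne_zero.mpr hne) fun h => hm2 (by linear_combination -h)
  have hsum : ∑ p ∈ univ.erase (⟨0, by omega⟩ : Fin (n + 1)),
      (q₁ ^ (n + 1 - p.val) - q₂ ^ (n + 1 - p.val)) * f p =
      ∑ k ∈ range n, (q₁ ^ (n - k) - q₂ ^ (n - k)) * f (k + 1 : ℕ) := by
    simpa [Fin.cast_val_eq_self] using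
      sum_univ_erase_zero_eq_sum_range n (fun k => (q₁ ^ (n + 1 - k) - q₂ ^ (n + 1 - k)) * f k)
  have hzero : (⟨0, by omega⟩ : Fin (n + 1)) = ((0 : ℕ) : Fin (n + 1)) := rfl
  -- reading `x` at `ℕ`-indices cast into `Fin (n + 1)` makes it periodic: `x (n + 1) = x 0`
  rw [eq_div_iff hD, hsum, hzero, weighted_sum_eq_of_periodic_bvp hprod (X := fun k : ℕ => x k)
    (f := fun k : ℕ => f k) (by simp) (by simp [hrow, omegaMat_mulVec_zero hn])
    fun k hk => by rw [hrow, omegaMat_mulVec_natCast_succ hn x hk]]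
  ring
end

section
/- For an integer m ≥ 3, let Ω denote the m × m real matrix with rows and columns indexed by 0, 1, …, m−1, whose entries are: Ω(0,1) = 2; Ω(i,j) = 1 whenever |i − j| = 1 and (i,j) ≠ (0,1); Ω(m−1,0) = 1; and all other entries equal 0. If m is even (so m ≥ 4), then for every t ∈ ℝ and every p with 1 ≤ p ≤ m−1, the (0,p) entry of the matrix exponential exp(tΩ) equals (2/m²)·( (m−p)·( e^{2t} + (−1)^p·e^{−2t} ) + 2·Σ_{q=1}^{(m−2)/2} [ (m−p)·cos(2πpq/m) + 2t·sin(2πpq/m)·sin(2πq/m) ]·e^{2t·cos(2πq/m)} ). -/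
/-!
Row `0` of `exp (t • Ω)` is a discrete Fourier sum. With `θ_q = 2πq/m` and the modes
`f_q(p, t) = ((m - p) cos pθ_q + 2t sin pθ_q sin θ_q) e^{2t cos θ_q}`, the functions
`F_p = (2/m²) ∑_{q<m} f_q(p, ·)` satisfy `F'_{p+1} = F_p + F_{p+2}`, `F'_0 = 2 (F_1 + F_{m-1})`
and `F_m = 0`, termwise by the addition formulas. Hence the row vector `(F_0/2, F_1, …, F_{m-1})`
solves `v' = v Ω`, and at `t = 0` it is the first unit vector by orthogonality of the characters
`q ↦ e^{2πipq/m}`. Solutions of `v' = v Ω` are `v 0 exp (tΩ)`, because `v(t) exp (-tΩ)` has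
derivative zero. For even `m` the modes `q` and `m - q` coincide and `q = 0`, `q = m/2` give
`e^{±2t}`, which folds the sum into the stated form.
-/

open scoped BigOperators

open Real Finset Matrix

theorem HasDerivAt.vecMul {m n : Type*} [Fintype m] {g : ℝ → m → ℝ} {g' : m → ℝ}
    {E : ℝ → Matrix m n ℝ} {E' : Matrix m n ℝ} {t : ℝ} (hg : HasDerivAt g g' t)
    (hE : ∀ i j, HasDerivAt (fun u => E u i j) (E' i j) t) :
    HasDerivAt (fun u => g u ᵥ* E u) (g' ᵥ* E t + g t ᵥ* E') t := by
  refine hasDerivAt_pi.2 fun j => ?_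
  show HasDerivAt (fun u => ∑ i, g u i * E u i j)
    (∑ i, g' i * E t i j + ∑ i, g t i * E' i j) t
  rw [← sum_add_distrib]
  exact HasDerivAt.fun_sum fun i _ => (hasDerivAt_pi.1 hg i).mul (hE i j)

namespace Matrix

variable {n : Type*} [Fintype n] [DecidableEq n]

theorem hasDerivAt_exp_smul_apply (A : Matrix n n ℝ) (i j : n) (t : ℝ) :
    HasDerivAt (fun u : ℝ => NormedSpace.exp (u • A) i j)
      ((NormedSpace.exp (t • A) * A) i j) t :=
  open scoped Norms.Operator in
  (entryLinearMap ℝ ℝ i j).toContinuousLinearMap.hasFDerivAt.comp_hasDerivAt t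
    (hasDerivAt_exp_smul_const A t)

theorem eq_vecMul_exp_smul_of_hasDerivAt (A : Matrix n n ℝ) {g : ℝ → n → ℝ}
    (hg : ∀ t, HasDerivAt g (g t ᵥ* A) t) (t : ℝ) :
    g t = g 0 ᵥ* NormedSpace.exp (t • A) := by
  have hderiv : ∀ u, HasDerivAt (fun u => g u ᵥ* NormedSpace.exp ((-u) • A)) 0 u := by
    intro u
    have hE : ∀ i j, HasDerivAt (fun v => NormedSpace.exp ((-v) • A) i j)
        ((-(NormedSpace.exp ((-u) • A) * A)) i j) u := fun i j => by
      simpa [Function.comp_def] using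
        (hasDerivAt_exp_smul_apply A i j (-u)).comp u (hasDerivAt_neg u)
    convert (hg u).vecMul hE using 1
    rw [vecMul_vecMul, ← ((Commute.refl A).smul_right (-u)).exp_right.eq, vecMul_neg,
      add_neg_cancel]
  have hconst := is_const_of_deriv_eq_zero (fun u => (hderiv u).differentiableAt)
    (fun u => (hderiv u).deriv) t 0
  have hinv : NormedSpace.exp ((-t) • A) * NormedSpace.exp (t • A) = 1 := by
    rw [← exp_add_of_commute _ _ (((Commute.refl A).smul_right t).smul_left (-t)), ← add_smul,
      neg_add_cancel, zero_smul, NormedSpace.exp_zero]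
  simp only [neg_zero, zero_smul, NormedSpace.exp_zero, vecMul_one] at hconst
  rw [← hconst, vecMul_vecMul, hinv, vecMul_one]

end Matrix

theorem Finset.sum_range_two_mul_add_two_of_reflect {M : Type*} [AddCommMonoid M] (f : ℕ → M)
    (k : ℕ) (hf : ∀ q ≤ 2 * k + 2, f (2 * k + 2 - q) = f q) :
    ∑ q ∈ range (2 * k + 2), f q = f 0 + f (k + 1) + 2 • ∑ q ∈ Icc 1 k, f q := by
  have hmiddle : ∑ q ∈ Icc 1 k, f q = ∑ q ∈ range k, f (q + 1) := by
    rw [← Ico_add_one_right_eq_Icc, sum_Ico_eq_sum_range, Nat.add_sub_cancel]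
    simp only [add_comm 1]
  have hupper : ∑ q ∈ Ico (k + 2) (2 * k + 2), f q = ∑ q ∈ Icc 1 k, f q := by
    calc ∑ q ∈ Ico (k + 2) (2 * k + 2), f q = ∑ q ∈ Ico 1 (k + 1), f (2 * k + 2 - q) := by
          rw [sum_Ico_reflect f 1 (by omega : k + 1 ≤ 2 * k + 2 + 1)]
          rw [show 2 * k + 2 + 1 - (k + 1) = k + 2 by omega, Nat.add_sub_cancel]
      _ = ∑ q ∈ Icc 1 k, f q := by
          rw [← Ico_add_one_right_eq_Icc]
          exact sum_congr rfl fun q hq => hf q (by simp at hq; omega)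
  rw [← sum_range_add_sum_Ico f (by omega : k + 2 ≤ 2 * k + 2), hupper, sum_range_succ,
    sum_range_succ', ← hmiddle, two_nsmul]
  abel

theorem sum_range_cos_nat_mul_two_pi_div {m p : ℕ} (hmp : ¬ m ∣ p) :
    ∑ q ∈ range m, cos (p * (2 * π * q / m)) = 0 := by
  rcases eq_or_ne m 0 with rfl | hm
  · simp
  set ζ := Complex.exp (2 * π * Complex.I / m)
  have hζ : IsPrimitiveRoot ζ m := Complex.isPrimitiveRoot_exp m hm
  have hne : ζ ^ p ≠ 1 := mt (hζ.pow_eq_one_iff_dvd p).1 hmp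
  have hgeom : ∑ q ∈ range m, (ζ ^ p) ^ q = 0 := by
    rw [geom_sum_eq hne, ← pow_mul, mul_comm, pow_mul, hζ.pow_eq_one, one_pow, sub_self,
      zero_div]
  have hre : ∀ q : ℕ, cos (p * (2 * π * q / m)) = ((ζ ^ p) ^ q).re := by
    intro q
    rw [← pow_mul, ← Complex.exp_nat_mul, ← Complex.exp_ofReal_mul_I_re]
    push_cast
    ring_nf
  simp only [hre, ← Complex.re_sum, hgeom, Complex.zero_re]

noncomputable def omegaMode (m : ℕ) (θ : ℝ) (p : ℕ) (t : ℝ) : ℝ :=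
  ((m - p) * cos (p * θ) + 2 * t * sin (p * θ) * sin θ) * exp (2 * t * cos θ)

section omegaMode

variable (m : ℕ) (θ : ℝ) (p : ℕ) (t : ℝ)

theorem hasDerivAt_omegaMode :
    HasDerivAt (omegaMode m θ p)
      ((2 * sin (p * θ) * sin θ + ((m - p) * cos (p * θ) + 2 * t * sin (p * θ) * sin θ) *
        (2 * cos θ)) * exp (2 * t * cos θ)) t := by
  have hpoly : HasDerivAt (fun t => (m - p) * cos (p * θ) + 2 * t * sin (p * θ) * sin θ)
      (2 * sin (p * θ) * sin θ) t := by
    simpa using (((hasDerivAt_id t).const_mul 2).mul_const (sin (p * θ))).mul_const (sin θ)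
      |>.const_add ((m - p) * cos (p * θ))
  have hexp : HasDerivAt (fun t => exp (2 * t * cos θ)) (exp (2 * t * cos θ) * (2 * cos θ)) t := by
    simpa using (((hasDerivAt_id t).const_mul 2).mul_const (cos θ)).exp
  exact (hpoly.mul hexp).congr_deriv (by ring)

theorem hasDerivAt_omegaMode_succ :
    HasDerivAt (omegaMode m θ (p + 1)) (omegaMode m θ p t + omegaMode m θ (p + 2) t) t := by
  refine (hasDerivAt_omegaMode m θ (p + 1) t).congr_deriv ?_
  have hprev : (p : ℝ) * θ = ((p + 1 : ℕ) : ℝ) * θ - θ := by push_cast; ring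
  have hnext : ((p + 2 : ℕ) : ℝ) * θ = ((p + 1 : ℕ) : ℝ) * θ + θ := by push_cast; ring
  simp only [omegaMode]
  rw [hprev, hnext, cos_sub, sin_sub, cos_add, sin_add]
  push_cast
  ring

theorem hasDerivAt_omegaMode_zero (hm : m ≠ 0) (q : ℕ) :
    HasDerivAt (omegaMode m (2 * π * q / m) 0)
      (2 * (omegaMode m (2 * π * q / m) 1 t + omegaMode m (2 * π * q / m) (m - 1) t)) t := by
  refine (hasDerivAt_omegaMode m _ 0 t).congr_deriv ?_
  have hrefl : ((m - 1 : ℕ) : ℝ) * (2 * π * q / m) = q * (2 * π) - 2 * π * q / m := by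
    rw [Nat.cast_sub (by omega)]
    field_simp
    ring
  simp only [omegaMode]
  rw [hrefl, cos_nat_mul_two_pi_sub, sin_nat_mul_two_pi_sub, Nat.cast_sub (by omega)]
  simp only [Nat.cast_zero, Nat.cast_one, zero_mul, one_mul, cos_zero, sin_zero]
  ring

theorem omegaMode_self (hm : m ≠ 0) (q : ℕ) : omegaMode m (2 * π * q / m) m t = 0 := by
  have h : (m : ℝ) * (2 * π * q / m) = (2 * q : ℕ) * π := by push_cast; field_simp
  simp only [omegaMode, h, sin_nat_mul_pi, sub_self]
  ring

theorem omegaMode_apply_zero : omegaMode m θ p 0 = (m - p) * cos (p * θ) := by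
  simp [omegaMode]

theorem omegaMode_two_pi_sub : omegaMode m (2 * π - θ) p t = omegaMode m θ p t := by
  have h : (p : ℝ) * (2 * π - θ) = p * (2 * π) - p * θ := by ring
  simp only [omegaMode, h, cos_nat_mul_two_pi_sub, sin_nat_mul_two_pi_sub, cos_two_pi_sub,
    sin_two_pi_sub]
  ring

theorem omegaMode_zero_angle : omegaMode m 0 p t = (m - p) * exp (2 * t) := by
  simp [omegaMode]

theorem omegaMode_pi : omegaMode m π p t = (m - p) * (-1) ^ p * exp (-2 * t) := by
  simp [omegaMode, cos_nat_mul_pi]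

end omegaMode

noncomputable def omegaRow (m p : ℕ) (t : ℝ) : ℝ :=
  2 / m ^ 2 * ∑ q ∈ range m, omegaMode m (2 * π * q / m) p t

section omegaRow

variable (m : ℕ) (t : ℝ)

theorem hasDerivAt_omegaRow_succ (p : ℕ) :
    HasDerivAt (omegaRow m (p + 1)) (omegaRow m p t + omegaRow m (p + 2) t) t := by
  simp only [omegaRow, ← mul_add, ← sum_add_distrib]
  exact (HasDerivAt.fun_sum fun q _ => hasDerivAt_omegaMode_succ m _ p t).const_mul _

theorem hasDerivAt_omegaRow_zero (hm : m ≠ 0) :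
    HasDerivAt (omegaRow m 0) (2 * (omegaRow m 1 t + omegaRow m (m - 1) t)) t := by
  have h := (HasDerivAt.fun_sum (u := range m) fun q _ =>
    hasDerivAt_omegaMode_zero m t hm q).const_mul (2 / (m : ℝ) ^ 2)
  refine HasDerivAt.congr_deriv (f := omegaRow m 0) h ?_
  simp only [omegaRow, ← mul_sum, sum_add_distrib]
  ring

theorem omegaRow_self (hm : m ≠ 0) : omegaRow m m t = 0 := by
  simp [omegaRow, omegaMode_self m t hm]

theorem omegaRow_apply_zero {p : ℕ} (hp : p < m) : omegaRow m p 0 = if p = 0 then 2 else 0 := by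
  have hm : (m : ℝ) ≠ 0 := by norm_cast; omega
  simp only [omegaRow, omegaMode_apply_zero, ← mul_sum]
  split_ifs with hp0
  · simp only [hp0, Nat.cast_zero, sub_zero, zero_mul, cos_zero, mul_one, sum_const, card_range,
      nsmul_eq_mul]
    field_simp
  · rw [sum_range_cos_nat_mul_two_pi_div (fun h => hp0 (Nat.eq_zero_of_dvd_of_lt h hp))]
    simp

end omegaRow

theorem omegaMat_apply_eq_zero {m : ℕ} {i j : Fin m} (hij : (i : ℕ) + 1 ≠ j)
    (hji : (j : ℕ) + 1 ≠ i) (hwrap : ¬((i : ℕ) = m - 1 ∧ (j : ℕ) = 0)) : OmegaMat m i j = 0 := by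
  simp only [OmegaMat]
  split_ifs <;> first | rfl | (exfalso; omega)

theorem vecMul_omegaMat_apply_zero {m : ℕ} (hm : 3 ≤ m) (w : ℕ → ℝ) :
    ((fun i : Fin m => w i) ᵥ* OmegaMat m) ⟨0, by omega⟩ = w 1 + w (m - 1) := by
  have hnext : OmegaMat m ⟨1, by omega⟩ ⟨0, by omega⟩ = 1 := by simp [OmegaMat]
  have hwrap : OmegaMat m ⟨m - 1, by omega⟩ ⟨0, by omega⟩ = 1 := by
    simp only [OmegaMat]
    rw [if_neg (by omega), if_neg (by omega), if_pos (by simp)]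
  show ∑ i : Fin m, w i * OmegaMat m i _ = _
  rw [Fintype.sum_eq_add (⟨1, by omega⟩ : Fin m) ⟨m - 1, by omega⟩ (by simp [Fin.ext_iff]; omega),
    hnext, hwrap, mul_one, mul_one]
  rintro i ⟨h1, h2⟩
  simp only [ne_eq, Fin.ext_iff] at h1 h2
  rw [omegaMat_apply_eq_zero (by dsimp only; omega) (by dsimp only; omega) (by dsimp only; omega),
    mul_zero]

theorem vecMul_omegaMat_apply_of_ne_zero {m : ℕ} (hm : 3 ≤ m) (w : ℕ → ℝ) (hw : w m = 0)
    (j : Fin m) (hj : (j : ℕ) ≠ 0) :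
    ((fun i : Fin m => w i) ᵥ* OmegaMat m) j
      = (if (j : ℕ) = 1 then 2 else 1) * w ((j : ℕ) - 1) + w ((j : ℕ) + 1) := by
  have hprev : OmegaMat m ⟨(j : ℕ) - 1, by omega⟩ j = if (j : ℕ) = 1 then 2 else 1 := by
    simp only [OmegaMat]
    split_ifs <;> first | rfl | (exfalso; omega)
  show ∑ i : Fin m, w i * OmegaMat m i j = _
  rcases (show (j : ℕ) + 1 < m ∨ (j : ℕ) + 1 = m by omega) with hjm | hjm
  · have hnext : OmegaMat m ⟨(j : ℕ) + 1, hjm⟩ j = 1 := by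
      simp [OmegaMat]
    have hne : (⟨(j : ℕ) - 1, by omega⟩ : Fin m) ≠ ⟨(j : ℕ) + 1, hjm⟩ := by
      simp only [ne_eq, Fin.ext_iff]
      omega
    rw [Fintype.sum_eq_add _ _ hne, hprev, hnext, mul_comm, mul_one]
    rintro i ⟨h1, h2⟩
    simp only [ne_eq, Fin.ext_iff] at h1 h2
    rw [omegaMat_apply_eq_zero (by omega) (by omega) (by omega), mul_zero]
  · rw [Fintype.sum_eq_single (⟨(j : ℕ) - 1, by omega⟩ : Fin m), hprev, hjm, hw, add_zero, mul_comm]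
    intro i hi
    simp only [ne_eq, Fin.ext_iff] at hi
    rw [omegaMat_apply_eq_zero (by omega) (by omega) (by omega), mul_zero]

/- The halved entry at `0` absorbs the weight `Ω 0 1 = 2`, so that `v ᵥ* Ω` reproduces the
recurrence of `omegaRow`. -/
noncomputable def omegaRowVec (m : ℕ) (t : ℝ) (k : ℕ) : ℝ :=
  if k = 0 then omegaRow m 0 t / 2 else omegaRow m k t

theorem hasDerivAt_omegaRowVec {m : ℕ} (hm : 3 ≤ m) (t : ℝ) :
    HasDerivAt (fun u (j : Fin m) => omegaRowVec m u j)
      ((fun j : Fin m => omegaRowVec m t j) ᵥ* OmegaMat m) t := by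
  refine hasDerivAt_pi.2 fun j => ?_
  rcases j with ⟨_ | p, hp⟩
  · rw [vecMul_omegaMat_apply_zero hm]
    simp only [omegaRowVec, if_pos, one_ne_zero, if_false, show m - 1 ≠ 0 by omega]
    exact ((hasDerivAt_omegaRow_zero m t (by omega)).div_const 2).congr_deriv (by ring)
  · have hw : omegaRowVec m t m = 0 := by
      simp [omegaRowVec, omegaRow_self m t (by omega), show m ≠ 0 by omega]
    rw [vecMul_omegaMat_apply_of_ne_zero hm _ hw _ p.succ_ne_zero]
    refine (hasDerivAt_omegaRow_succ m t p).congr_deriv ?_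
    rcases p with _ | p
    · simp only [omegaRowVec, if_pos, if_neg two_ne_zero, zero_add]
      ring
    · simp [omegaRowVec]

theorem omegaRowVec_zero {m : ℕ} (hm : 0 < m) :
    (fun j : Fin m => omegaRowVec m 0 j) = Pi.single ⟨0, hm⟩ 1 := by
  funext ⟨j, hj⟩
  rcases j with _ | j
  · simp [omegaRowVec, omegaRow_apply_zero m hm]
  · simp [omegaRowVec, omegaRow_apply_zero m hj, Fin.ext_iff]

theorem exp_smul_omegaMat_zero_apply {m : ℕ} (hm : 3 ≤ m) (t : ℝ) (j : Fin m) :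
    NormedSpace.exp (t • OmegaMat m) ⟨0, by omega⟩ j = omegaRowVec m t j := by
  have h := eq_vecMul_exp_smul_of_hasDerivAt _ (hasDerivAt_omegaRowVec hm) t
  rw [omegaRowVec_zero (by omega), single_one_vecMul] at h
  exact (congrFun h j).symm

theorem omegaRow_eq_of_eq_two_mul_add_two {m k : ℕ} (hmk : m = 2 * k + 2) (p : ℕ) (t : ℝ) :
    omegaRow m p t = 2 / (m : ℝ) ^ 2 * ((m - p) * (exp (2 * t) + (-1) ^ p * exp (-2 * t)) +
      2 * ∑ q ∈ Icc 1 k, ((m - p) * cos (2 * π * p * q / m) +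
          2 * t * sin (2 * π * p * q / m) * sin (2 * π * q / m)) *
        exp (2 * t * cos (2 * π * q / m))) := by
  have hm : (m : ℝ) ≠ 0 := by norm_cast; omega
  have hreflect : ∀ q ≤ 2 * k + 2, omegaMode m (2 * π * ((2 * k + 2 - q : ℕ) : ℝ) / m) p t
      = omegaMode m (2 * π * q / m) p t := by
    intro q hq
    rw [← hmk, Nat.cast_sub (hmk ▸ hq), ← omegaMode_two_pi_sub]
    congr 1
    field_simp
    ring
  have hpi : 2 * π * ((k + 1 : ℕ) : ℝ) / m = π := by
    rw [hmk]
    push_cast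
    field_simp
  have hterm : ∀ q : ℕ, omegaMode m (2 * π * q / m) p t = ((m - p) * cos (2 * π * p * q / m) +
      2 * t * sin (2 * π * p * q / m) * sin (2 * π * q / m)) * exp (2 * t * cos (2 * π * q / m)) :=
    fun q => by simp only [omegaMode, show (p : ℝ) * (2 * π * q / m) = 2 * π * p * q / m by ring]
  have hsum := sum_range_two_mul_add_two_of_reflect (fun q => omegaMode m (2 * π * q / m) p t) k
    hreflect
  rw [← hmk] at hsum
  rw [omegaRow, hsum, Nat.cast_zero, mul_zero, zero_div, omegaMode_zero_angle, hpi, omegaMode_pi,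
    sum_congr rfl fun q _ => hterm q, two_nsmul]
  ring

/-- For even `m` (with `m ≥ 3`, so `m ≥ 4`), every `t ∈ ℝ` and every
`1 ≤ p ≤ m−1`, the `(0,p)` entry of `exp(tΩ)` equals
`(2/m²)·((m−p)·(e^{2t} + (−1)^p·e^{−2t}) + 2·Σ_{q=1}^{(m−2)/2} [(m−p)·cos(2πpq/m)
 + 2t·sin(2πpq/m)·sin(2πq/m)]·e^{2t·cos(2πq/m)})`. -/
theorem stmt9 (m : ℕ) (hm : 3 ≤ m) (heven : Even m) (t : ℝ)
    (p : ℕ) (hp1 : 1 ≤ p) (hpm : p ≤ m - 1) :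
    (NormedSpace.exp (t • OmegaMat m)) ⟨0, by omega⟩ ⟨p, by omega⟩ =
      (2 / (m : ℝ) ^ 2) * (((m : ℝ) - p) *
          (Real.exp (2 * t) + (-1 : ℝ) ^ p * Real.exp (-2 * t)) +
        2 * ∑ q ∈ Finset.Icc 1 ((m - 2) / 2),
          (((m : ℝ) - p) * Real.cos (2 * Real.pi * p * q / m) +
            2 * t * Real.sin (2 * Real.pi * p * q / m) * Real.sin (2 * Real.pi * q / m)) *
          Real.exp (2 * t * Real.cos (2 * Real.pi * q / m))) := by
  obtain ⟨k, hk⟩ := heven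
  rw [exp_smul_omegaMat_zero_apply hm, omegaRowVec, if_neg (show p ≠ 0 by omega),
    omegaRow_eq_of_eq_two_mul_add_two (by omega : m = 2 * ((m - 2) / 2) + 2)]
end

section
/- Let n ≥ 1, let A be a linear isometric automorphism of Euclidean space ℝⁿ, let h : ℝⁿ → ℝ be continuous, and define recursively H₀(t, p) = h(p) and H_{k+1}(t, p) = h(p) + ∫₀ᵗ H_k(s, A⁻¹ p) ds. If r ≥ 0 and h(p) ≥ r for every p with ‖p‖ = 1, then for every m ≥ 0, every t ≥ 0 and every p with ‖p‖ = 1, H_m(t, p) ≥ r·Σ_{k=0}^{m} t^k/k!. -/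
open scoped BigOperators Nat

/-!
Induction on `m`: the bound `h ≥ r` on the unit sphere propagates through the recursion because
`A⁻¹` preserves the sphere, and integrating the degree-`m` partial sum of `exp` from `0` to `t`
gives the degree-`m + 1` partial sum minus its constant term `1`.
-/

noncomputable def expPartialSum (m : ℕ) (t : ℝ) : ℝ :=
  ∑ k ∈ Finset.range (m + 1), t ^ k / k !

theorem continuous_expPartialSum (m : ℕ) : Continuous (expPartialSum m) := by
  unfold expPartialSum
  fun_prop

theorem integral_pow_div_factorial (k : ℕ) (t : ℝ) :
    ∫ s in (0 : ℝ)..t, s ^ k / k ! = t ^ (k + 1) / (k + 1)! := by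
  rw [intervalIntegral.integral_div, integral_pow, zero_pow k.succ_ne_zero, sub_zero,
    Nat.factorial_succ]
  push_cast
  field_simp

theorem integral_expPartialSum (m : ℕ) (t : ℝ) :
    ∫ s in (0 : ℝ)..t, expPartialSum m s = expPartialSum (m + 1) t - 1 := by
  unfold expPartialSum
  rw [intervalIntegral.integral_finsetSum
    fun k _ => (by fun_prop : Continuous fun s : ℝ => s ^ k / k !).intervalIntegrable 0 t,
    Finset.sum_range_succ' _ (m + 1)]
  simp only [integral_pow_div_factorial, pow_zero, Nat.factorial_zero, Nat.cast_one, div_one,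
    add_sub_cancel_right]

section SuccessiveApproximations

variable {E : Type*} {g : E → E} {h : E → ℝ} {H : ℕ → ℝ → E → ℝ}

theorem continuous_successiveApprox (hH0 : ∀ t p, H 0 t p = h p)
    (hHsucc : ∀ k t p, H (k + 1) t p = h p + ∫ s in (0 : ℝ)..t, H k s (g p)) (k : ℕ) (p : E) :
    Continuous fun t => H k t p := by
  induction k generalizing p with
  | zero => simpa only [hH0] using continuous_const
  | succ k ih =>
    simp only [hHsucc]
    exact continuous_const.add
      (intervalIntegral.continuous_primitive (fun a b => (ih (g p)).intervalIntegrable a b) 0)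

theorem mul_expPartialSum_le_successiveApprox {S : Set E} (hg : Set.MapsTo g S S) {r : ℝ}
    (hhr : ∀ p ∈ S, r ≤ h p) (hH0 : ∀ t p, H 0 t p = h p)
    (hHsucc : ∀ k t p, H (k + 1) t p = h p + ∫ s in (0 : ℝ)..t, H k s (g p))
    (m : ℕ) {t : ℝ} (ht : 0 ≤ t) {p : E} (hp : p ∈ S) :
    r * expPartialSum m t ≤ H m t p := by
  induction m generalizing t p with
  | zero => simpa [expPartialSum, hH0] using hhr p hp
  | succ m ih =>
    have hint : ∫ s in (0 : ℝ)..t, r * expPartialSum m s ≤ ∫ s in (0 : ℝ)..t, H m s (g p) :=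
      intervalIntegral.integral_mono_on ht
        (((continuous_expPartialSum m).const_mul r).intervalIntegrable 0 t)
        ((continuous_successiveApprox hH0 hHsucc m (g p)).intervalIntegrable 0 t)
        fun s hs => ih hs.1 (hg hp)
    rw [intervalIntegral.integral_const_mul, integral_expPartialSum] at hint
    rw [hHsucc]
    linarith [hhr p hp]

end SuccessiveApproximations

theorem stmt11_general (n : ℕ)
    (A : EuclideanSpace ℝ (Fin n) ≃ₗᵢ[ℝ] EuclideanSpace ℝ (Fin n))
    (h : EuclideanSpace ℝ (Fin n) → ℝ)
    (H : ℕ → ℝ → EuclideanSpace ℝ (Fin n) → ℝ)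
    (hH0 : ∀ t p, H 0 t p = h p)
    (hHsucc : ∀ k t p, H (k + 1) t p = h p + ∫ s in (0 : ℝ)..t, H k s (A.symm p))
    (r : ℝ) (hhr : ∀ p, ‖p‖ = 1 → r ≤ h p) :
    ∀ (m : ℕ) (t : ℝ), 0 ≤ t → ∀ p, ‖p‖ = 1 →
      r * ∑ k ∈ Finset.range (m + 1), t ^ k / (Nat.factorial k : ℝ) ≤ H m t p := by
  have hA : Set.MapsTo A.symm (Metric.sphere 0 1) (Metric.sphere 0 1) := fun p hp => by
    simpa only [mem_sphere_zero_iff_norm, LinearIsometryEquiv.norm_map] using hp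
  intro m t ht p hp
  exact mul_expPartialSum_le_successiveApprox hA (fun q hq => hhr q (mem_sphere_zero_iff_norm.1 hq))
    hH0 hHsucc m ht (mem_sphere_zero_iff_norm.2 hp)

/-- For a linear isometric automorphism `A` of `ℝⁿ`, continuous
`h : ℝⁿ → ℝ`, and the successive approximations
`H₀(t,p) = h(p)`, `H_{k+1}(t,p) = h(p) + ∫₀ᵗ H_k(s, A⁻¹p) ds`, if `h ≥ r ≥ 0` on
the unit sphere then `H_m(t,p) ≥ r·Σ_{k=0}^{m} tᵏ/k!` for all `t ≥ 0`, `‖p‖ = 1`. -/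
theorem stmt11 (n : ℕ) (hn : 1 ≤ n)
    (A : EuclideanSpace ℝ (Fin n) ≃ₗᵢ[ℝ] EuclideanSpace ℝ (Fin n))
    (h : EuclideanSpace ℝ (Fin n) → ℝ) (hcont : Continuous h)
    (H : ℕ → ℝ → EuclideanSpace ℝ (Fin n) → ℝ)
    (hH0 : ∀ t p, H 0 t p = h p)
    (hHsucc : ∀ k t p, H (k + 1) t p = h p + ∫ s in (0 : ℝ)..t, H k s (A.symm p))
    (r : ℝ) (hr : 0 ≤ r) (hhr : ∀ p, ‖p‖ = 1 → r ≤ h p) :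
    ∀ (m : ℕ) (t : ℝ), 0 ≤ t → ∀ p, ‖p‖ = 1 →
      r * ∑ k ∈ Finset.range (m + 1), t ^ k / (Nat.factorial k : ℝ) ≤ H m t p :=
  stmt11_general n A h H hH0 hHsucc r hhr
end

section
/- Let n ≥ 2 and let 𝕂 be the set of multisets of nonnegative integers of cardinality n−1. Define a linear map Ω on the space ℓ∞(𝕂) of bounded real-valued functions on 𝕂 by (Ωx)(s) = Σ_{a ∈ s, counted with multiplicity} x( (s with one copy of a removed) + {a+1} ) + T(s), where T(s) = x( (s with one copy of 0 removed) + {1} ) if 0 ∈ s, and T(s) = x( the multiset obtained from s by decreasing every element by 1 ) if every element of s is positive. Then Ω is a bounded linear operator on ℓ∞(𝕂) and its operator norm equals n. -/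
open scoped ENNReal

/-- The action of the comparison operator `Ω` on functions
`x : 𝕂 → ℝ`, where `𝕂` is the set of multisets of nonnegative integers of
cardinality `n − 1`:
`(Ωx)(s) = Σ_{a ∈ s (with multiplicity)} x(s − {a} + {a+1}) + T(s)`, where
`T(s) = x(s − {0} + {1})` if `0 ∈ s`, and `T(s) = x(image of s under a ↦ a−1)`
if every element of `s` is positive. -/
noncomputable def omegaAct (n : ℕ) (x : {s : Multiset ℕ // Multiset.card s = n - 1} → ℝ)
    (s : {s : Multiset ℕ // Multiset.card s = n - 1}) : ℝ :=
  (s.1.attach.map (fun a =>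
      x ⟨s.1.erase a.1 + {a.1 + 1}, by
        have ha : a.1 ∈ s.1 := a.2
        have h0 : 0 < Multiset.card s.1 := Multiset.card_pos_iff_exists_mem.mpr ⟨a.1, ha⟩
        have hs := s.2
        simp only [Multiset.card_add, Multiset.card_erase_of_mem ha,
          Multiset.card_singleton, Nat.pred_eq_sub_one]
        omega⟩)).sum +
  (if h : (0 : ℕ) ∈ s.1 then
      x ⟨s.1.erase 0 + {1}, by
        have h0 : 0 < Multiset.card s.1 := Multiset.card_pos_iff_exists_mem.mpr ⟨0, h⟩
        have hs := s.2
        simp only [Multiset.card_add, Multiset.card_erase_of_mem h,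
          Multiset.card_singleton, Nat.pred_eq_sub_one]
        omega⟩
    else
      x ⟨s.1.map (fun a => a - 1), by rw [Multiset.card_map]; exact s.2⟩)

lemma omegaAct_add (n : ℕ) (x y : {s : Multiset ℕ // Multiset.card s = n - 1} → ℝ)
    (s : {s : Multiset ℕ // Multiset.card s = n - 1}) :
    omegaAct n (fun k => x k + y k) s = omegaAct n x s + omegaAct n y s := by
  unfold omegaAct
  rw [Multiset.sum_map_add]
  split_ifs <;> ring

lemma omegaAct_smul (n : ℕ) (c : ℝ) (x : {s : Multiset ℕ // Multiset.card s = n - 1} → ℝ)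
    (s : {s : Multiset ℕ // Multiset.card s = n - 1}) :
    omegaAct n (fun k => c * x k) s = c * omegaAct n x s := by
  unfold omegaAct
  rw [Multiset.sum_map_mul_left]
  split_ifs <;> ring

lemma omegaAct_abs_le (n : ℕ) (hn : 1 ≤ n) (x : {s : Multiset ℕ // Multiset.card s = n - 1} → ℝ)
    (C : ℝ) (hC : ∀ k, |x k| ≤ C)
    (s : {s : Multiset ℕ // Multiset.card s = n - 1}) :
    |omegaAct n x s| ≤ n * C := by
  have hC0 : 0 ≤ C := le_trans (abs_nonneg _) (hC s)
  unfold omegaAct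
  refine le_trans (abs_add_le _ _) ?_
  have h1 : ∀ (f : {a // a ∈ s.1} → ℝ), (∀ a, |f a| ≤ C) →
      |(s.1.attach.map f).sum| ≤ ((n : ℝ) - 1) * C := by
    intro f hf
    refine le_trans Multiset.abs_sum_le_sum_abs ?_
    rw [Multiset.map_map]
    have := Multiset.sum_le_card_nsmul (s.1.attach.map (abs ∘ f)) C (by
      intro a ha
      obtain ⟨b, _, rfl⟩ := Multiset.mem_map.mp ha
      exact hf b)
    rw [Multiset.card_map, Multiset.card_attach, s.2] at this
    refine le_trans this ?_
    rw [nsmul_eq_mul, Nat.cast_sub hn]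
    norm_num
  have h2 : |(if h : (0:ℕ) ∈ s.1 then x ⟨s.1.erase 0 + {1}, by
        have h0 : 0 < Multiset.card s.1 := Multiset.card_pos_iff_exists_mem.mpr ⟨0, h⟩
        have hs := s.2
        simp only [Multiset.card_add, Multiset.card_erase_of_mem h,
          Multiset.card_singleton, Nat.pred_eq_sub_one]
        omega⟩
    else x ⟨s.1.map (fun a => a - 1), by rw [Multiset.card_map]; exact s.2⟩)| ≤ C := by
    split_ifs <;> apply hC
  calc _ ≤ ((n:ℝ) - 1) * C + C := add_le_add (h1 _ (fun a => hC _)) h2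
    _ = n * C := by ring

lemma omegaAct_one (n : ℕ) (hn : 1 ≤ n)
    (s : {s : Multiset ℕ // Multiset.card s = n - 1}) :
    omegaAct n (fun _ => (1:ℝ)) s = n := by
  unfold omegaAct
  rw [Multiset.map_const', Multiset.sum_replicate, Multiset.card_attach, s.2,
    nsmul_eq_mul, Nat.cast_sub hn]
  split_ifs <;> norm_num

lemma omegaAct_norm_le (n : ℕ) (hn : 1 ≤ n)
    (x : lp (fun _ : {s : Multiset ℕ // Multiset.card s = n - 1} => ℝ) ∞)
    (s : {s : Multiset ℕ // Multiset.card s = n - 1}) :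
    ‖omegaAct n (fun k => x k) s‖ ≤ n * ‖x‖ := by
  rw [Real.norm_eq_abs]
  exact omegaAct_abs_le n hn _ ‖x‖
    (fun k => (Real.norm_eq_abs (x k)) ▸ lp.norm_apply_le_norm ENNReal.top_ne_zero x k) s

lemma omegaAct_memℓp (n : ℕ) (hn : 1 ≤ n)
    (x : lp (fun _ : {s : Multiset ℕ // Multiset.card s = n - 1} => ℝ) ∞) :
    Memℓp (fun s => omegaAct n (fun k => x k) s) ∞ :=
  memℓp_infty ⟨n * ‖x‖, by rintro _ ⟨s, rfl⟩; exact omegaAct_norm_le n hn x s⟩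

noncomputable def omegaLin (n : ℕ) (hn : 1 ≤ n) :
    lp (fun _ : {s : Multiset ℕ // Multiset.card s = n - 1} => ℝ) ∞ →ₗ[ℝ]
    lp (fun _ : {s : Multiset ℕ // Multiset.card s = n - 1} => ℝ) ∞ where
  toFun x := ⟨fun s => omegaAct n (fun k => x k) s, omegaAct_memℓp n hn x⟩
  map_add' x y := by
    apply Subtype.ext
    funext s
    have h : ∀ k, (x + y) k = x k + y k := fun k => lp.coeFn_add x y ▸ rfl
    show omegaAct n (fun k => (x + y) k) s = _
    simp only [h]
    exact omegaAct_add n (fun k => x k) (fun k => y k) s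
  map_smul' c x := by
    apply Subtype.ext
    funext s
    have h : ∀ k, (c • x) k = c * x k := fun k => by
      rw [lp.coeFn_smul]; simp
    show omegaAct n (fun k => (c • x) k) s = _
    simp only [h]
    exact omegaAct_smul n c (fun k => x k) s


/-- For `n ≥ 2`, the operator `Ω` defined by `omegaAct` is a bounded
linear operator on `ℓ∞(𝕂)` whose operator norm equals `n`. -/
theorem stmt16 (n : ℕ) (hn : 2 ≤ n) :
    ∃ T : lp (fun _ : {s : Multiset ℕ // Multiset.card s = n - 1} => ℝ) ∞ →L[ℝ]
          lp (fun _ : {s : Multiset ℕ // Multiset.card s = n - 1} => ℝ) ∞,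
      (∀ (x : lp (fun _ : {s : Multiset ℕ // Multiset.card s = n - 1} => ℝ) ∞)
         (s : {s : Multiset ℕ // Multiset.card s = n - 1}),
        T x s = omegaAct n (fun k => x k) s) ∧ ‖T‖ = n := by
  have hn1 : 1 ≤ n := le_trans (by norm_num) hn
  have hbound : ∀ x, ‖omegaLin n hn1 x‖ ≤ (n : ℝ) * ‖x‖ := by
    intro x
    refine lp.norm_le_of_forall_le (by positivity) ?_
    intro s
    exact omegaAct_norm_le n hn1 x s
  refine ⟨(omegaLin n hn1).mkContinuous n hbound, fun x s => rfl, ?_⟩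
  refine le_antisymm ((omegaLin n hn1).mkContinuous_norm_le (by positivity) hbound) ?_
  -- lower bound via constant function 1
  set one : lp (fun _ : {s : Multiset ℕ // Multiset.card s = n - 1} => ℝ) ∞ :=
    ⟨fun _ => 1, memℓp_infty ⟨1, by rintro _ ⟨s, rfl⟩; simp⟩⟩ with hone
  have hone_norm : ‖one‖ ≤ 1 := lp.norm_le_of_forall_le zero_le_one (by intro s; simp [hone])
  set s₀ : {s : Multiset ℕ // Multiset.card s = n - 1} :=
    ⟨Multiset.replicate (n - 1) 0, Multiset.card_replicate _ _⟩
  set T := (omegaLin n hn1).mkContinuous n hbound with hT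
  have h1 : (n : ℝ) = ‖(T one) s₀‖ := by
    show (n : ℝ) = ‖omegaAct n (fun k => one k) s₀‖
    have : (fun k : {s : Multiset ℕ // Multiset.card s = n - 1} => one k) = fun _ => (1:ℝ) := rfl
    rw [this, omegaAct_one n hn1, Real.norm_eq_abs, abs_of_nonneg (by positivity)]
  have h2 : ‖(T one) s₀‖ ≤ ‖T one‖ := lp.norm_apply_le_norm ENNReal.top_ne_zero _ _
  have h3 : ‖T one‖ ≤ ‖T‖ * ‖one‖ := T.le_opNorm one
  have h4 : ‖T‖ * ‖one‖ ≤ ‖T‖ * 1 := by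
    apply mul_le_mul_of_nonneg_left hone_norm (norm_nonneg T)
  linarith
end
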